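/- Assume μ satisfies condition C. Then the stationary law η (the law of R = Q₁ + Σ_{k≥1} M₁⋯Mₖ Q_{k+1}) has no atoms and gives measure zero to every proper affine subspace of V. -/

import Mathlib

open MeasureTheory ProbabilityTheory Filter Topology Complex
open scoped ENNReal NNReal

noncomputable section

/-- `Vd d` is the vector space `V = ℝ^d` with its Euclidean structure. -/
abbrev Vd (d : ℕ) := EuclideanSpace ℝ (Fin d)

/-- Continuous linear endomorphisms of `V`; the multiplicative part of affine maps
lives here (invertibility is imposed via hypotheses). -/
abbrev Ld (d : ℕ) := Vd d →L[ℝ] Vd d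

/-- The affine group `H = V ⋊ G` is modelled as pairs `(b, g)` acting by `x ↦ g x + b`. -/
abbrev Hd (d : ℕ) := Vd d × Ld d

variable {d : ℕ}

/-- Action of an affine map `h = (b, g)` on `V` : `h x = g x + b`. -/
def aff (h : Hd d) (x : Vd d) : Vd d := h.2 x + h.1

/-- Transpose (adjoint) of `g ∈ G`. -/
def adjL (g : Ld d) : Ld d := ContinuousLinearMap.adjoint g

/-- Support of a measure: points all of whose open neighbourhoods have positive measure. -/
def msupp {X : Type*} [TopologicalSpace X] [MeasurableSpace X] (ρ : Measure X) : Set X :=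
  {x | ∀ U : Set X, IsOpen U → x ∈ U → ρ U ≠ 0}

/-- The closed sub-semigroup `[supp ρ]` generated by the support of a measure `ρ` on `G`. -/
def suppSG (ρ : Measure (Ld d)) : Set (Ld d) :=
  closure ((Subsemigroup.closure (msupp ρ) : Subsemigroup (Ld d)) : Set (Ld d))

/-- `g` is proximal : it has a real dominant algebraically simple eigenvalue `lam`,
with an invariant complement on which `g` has spectral radius `< |lam|`. -/
def IsProximal (g : Ld d) : Prop :=
  ∃ (lam : ℝ) (u : Vd d) (W : Submodule ℝ (Vd d)), lam ≠ 0 ∧ u ≠ 0 ∧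
    g u = lam • u ∧ (∀ w ∈ W, g w ∈ W) ∧
    Submodule.span ℝ {u} ⊔ W = ⊤ ∧ Submodule.span ℝ {u} ⊓ W = ⊥ ∧
    ∃ C r : ℝ, 0 ≤ r ∧ r < |lam| ∧ ∀ (n : ℕ), ∀ w ∈ W, ‖(g ^ n) w‖ ≤ C * r ^ n * ‖w‖

/-- A set `Γ ⊂ G` is strongly irreducible if no finite union of proper nonzero
subspaces of `V` is `Γ`-invariant. -/
def StronglyIrreducible (Γ : Set (Ld d)) : Prop :=
  ∀ S : Finset (Submodule ℝ (Vd d)), S.Nonempty → (∀ W ∈ S, W ≠ ⊥ ∧ W ≠ ⊤) →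
    ∃ g ∈ Γ, ∃ W ∈ S, ∃ x ∈ W, ∀ W' ∈ S, g x ∉ (W' : Set (Vd d))

/-- `Γ` satisfies condition i-p: strong irreducibility plus a proximal element. -/
def ConditionIP (Γ : Set (Ld d)) : Prop :=
  StronglyIrreducible Γ ∧ ∃ g ∈ Γ, IsProximal g

/-- Iterated lower integral computing `𝔼 f(Mₙ ⋯ M₁ g)` for `(Qᵢ,Mᵢ)` i.i.d. of law `μ`. -/
def prodLint (μ : Measure (Hd d)) (f : Ld d → ℝ≥0∞) : ℕ → Ld d → ℝ≥0∞
  | 0, g => f g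
  | n + 1, g => ∫⁻ h, prodLint μ f n (h.2 * g) ∂μ

/-- Iterated (Bochner) integral computing `𝔼 f(Mₙ ⋯ M₁ g)`. -/
def prodInt (μ : Measure (Hd d)) (f : Ld d → ℝ) : ℕ → Ld d → ℝ
  | 0, g => f g
  | n + 1, g => ∫ h, prodInt μ f n (h.2 * g) ∂μ

/-- `(𝔼 ‖Mₙ ⋯ M₁‖ˢ)^(1/n)`, whose limit is `κ(s)`. -/
def kappaApprox (μ : Measure (Hd d)) (s : ℝ) (n : ℕ) : ℝ≥0∞ :=
  (prodLint μ (fun g => (‖g‖₊ : ℝ≥0∞) ^ s) n 1) ^ (1 / (n : ℝ))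

/-- `(1/n) 𝔼 log ‖Mₙ ⋯ M₁‖`, whose limit is the top Lyapunov exponent `L(μ̄)`. -/
def lyapApprox (μ : Measure (Hd d)) (n : ℕ) : ℝ :=
  (1 / (n : ℝ)) * prodInt μ (fun g => Real.log ‖g‖) n 1

/-- Condition `C` of Guivarc'h–Le Page for the measure `μ` on `H = V ⋊ G`, with the
function `κ` and the exponent `α` (`κ(α) = 1`). -/
structure ConditionC (d : ℕ) (μ : Measure (Hd d)) (α : ℝ) (κ : ℝ → ℝ≥0∞) : Prop where
  prob : IsProbabilityMeasure μ
  /- C1 : condition i-p for `[supp μ̄]` -/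
  ip : ConditionIP (suppSG (μ.map Prod.snd))
  /- `κ(s)` is the limit of `(𝔼‖Mₙ⋯M₁‖ˢ)^{1/n}` -/
  hκ : ∀ s : ℝ, 0 ≤ s → Tendsto (fun n => kappaApprox μ s n) atTop (𝓝 (κ s))
  /- C2 : negative top Lyapunov exponent -/
  lyap_neg : ∃ ℓ : ℝ, ℓ < 0 ∧ Tendsto (fun n => lyapApprox μ n) atTop (𝓝 ℓ)
  /- C2 : `α ∈ (0, s_∞)` is such that `κ(α) = 1` and `lim_{s → s_∞} κ(s) > 1` -/
  alpha_pos : 0 < α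
  kappa_alpha : κ α = 1
  kappa_gt_one : ∃ s : ℝ, α < s ∧ 1 < κ s ∧ κ s < ⊤
  /- C3 : moments of order `α + δ` -/
  moment : ∃ δ : ℝ, 0 < δ ∧
    (∫⁻ h : Hd d, (max ‖h.2‖₊ ‖Ring.inverse h.2‖₊ : ℝ≥0∞) ^ (α + δ)
      + (‖h.1‖₊ : ℝ≥0∞) ^ (α + δ) ∂μ) < ⊤
  ae_invertible : ∀ᵐ h ∂μ, IsUnit h.2
  /- C4 : no fixed point for `supp μ` -/
  no_fixed_point : ∀ x : Vd d, ∃ h ∈ msupp μ, aff h x ≠ x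

variable {Ω : Type*} [MeasurableSpace Ω]

/-- The affine random walk `X₀ˣ = x`, `Xₙ₊₁ˣ = Mₙ₊₁ Xₙˣ + Qₙ₊₁` driven by the
i.i.d. sequence `Y n = (Qₙ₊₁, Mₙ₊₁)`. -/
def Xproc (Y : ℕ → Ω → Hd d) (x : Vd d) : ℕ → Ω → Vd d
  | 0, _ => x
  | n + 1, ω => aff (Y n ω) (Xproc Y x n ω)

/-- Birkhoff sums `Sₙˣ = ∑_{k=0}^n Xₖˣ`. -/
def Sproc (Y : ℕ → Ω → Hd d) (x : Vd d) (n : ℕ) (ω : Ω) : Vd d :=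
  ∑ k ∈ Finset.range (n + 1), Xproc Y x k ω

/-- `prodFwd Y n = M₁ M₂ ⋯ Mₙ` (composition in this order). -/
def prodFwd (Y : ℕ → Ω → Hd d) : ℕ → Ω → Ld d
  | 0, _ => 1
  | n + 1, ω => prodFwd Y n ω * (Y n ω).2

/-- `Rₙ = Q₁ + ∑_{k=1}^{n-1} M₁⋯Mₖ Q_{k+1}`. -/
def Rproc (Y : ℕ → Ω → Hd d) (n : ℕ) (ω : Ω) : Vd d :=
  ∑ k ∈ Finset.range n, prodFwd Y k ω ((Y k ω).1)

/-- The a.s. limit `R` of `Rₙ` (junk value where the limit does not exist). -/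
def Rlim (Y : ℕ → Ω → Hd d) (ω : Ω) : Vd d :=
  limUnder atTop fun n => Rproc Y n ω

/-- `Zₙ* = ∑_{k=1}^n M₁* ⋯ Mₖ*`. -/
def Zstar (Y : ℕ → Ω → Hd d) (n : ℕ) (ω : Ω) : Ld d :=
  ∑ k ∈ Finset.Icc 1 n, (List.ofFn fun i : Fin k => adjL ((Y i ω).2)).prod

/-- The i.i.d. hypothesis: the law of any finite window of `Y` is the product of copies of `μ`. -/
def IsIIDWithLaw (μ : Measure (Hd d)) (Pr : Measure Ω) (Y : ℕ → Ω → Hd d) : Prop :=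
  (∀ n, Measurable (Y n)) ∧
    ∀ n : ℕ, Measure.map (fun ω => fun i : Fin n => Y i ω) Pr = Measure.pi fun _ : Fin n => μ

/-- `η` is a `P`-stationary probability measure for the affine random walk of law `μ`. -/
def IsAffStationary (μ : Measure (Hd d)) (η : Measure (Vd d)) : Prop :=
  IsProbabilityMeasure η ∧
    Measure.map (fun p : Hd d × Vd d => aff p.1 p.2) (μ.prod η) = η

/-- `ρ` is a stationary probability measure of the companion recursion
`Wₙ = Mₙ*(Wₙ₋₁ + v)`. -/
def IsCompanionStationary (μ : Measure (Hd d)) (v : Vd d) (ρ : Measure (Vd d)) : Prop :=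
  IsProbabilityMeasure ρ ∧
    Measure.map (fun p : Hd d × Vd d => adjL p.1.2 (p.2 + v)) (μ.prod ρ) = ρ

/-- Vague convergence on `V ∖ {0}` of `t^{-α} (t.η)` to `Λ` as `t → 0⁺`. -/
def VagueLimitAtZero (η : Measure (Vd d)) (α : ℝ) (Λ : Measure (Vd d)) : Prop :=
  ∀ f : Vd d → ℝ, Continuous f → HasCompactSupport f → (0 : Vd d) ∉ tsupport f →
    Tendsto (fun t : ℝ => (∫ x, f (t • x) ∂η) / t ^ α) (𝓝[>] (0 : ℝ))
      (𝓝 (∫ x, f x ∂Λ))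

/-- `Λ = c · σ ⊗ ℓ^α` where `σ` is a probability measure on the unit sphere and
`ℓ^α(dt) = dt/t^{α+1}`. -/
def IsHomogDecomp (Λ : Measure (Vd d)) (σ : Measure (Vd d)) (α : ℝ) (c : ℝ) : Prop :=
  IsProbabilityMeasure σ ∧ σ {x : Vd d | ‖x‖ = 1}ᶜ = 0 ∧
    ∀ f : Vd d → ℝ, Continuous f → HasCompactSupport f → (0 : Vd d) ∉ tsupport f →
      ∫ x, f x ∂Λ = c * ∫ w, (∫ t in Set.Ioi (0 : ℝ), f (t • w) / t ^ (α + 1)) ∂σ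

/-- `e^{i⟨y, x⟩}`. -/
def eI (y x : Vd d) : ℂ := Complex.exp (Complex.I * ((inner ℝ y x : ℝ) : ℂ))

/-- Characteristic function (Fourier transform) of a measure on `V`. -/
def charFn (ν : Measure (Vd d)) (v : Vd d) : ℂ := ∫ x, eI v x ∂ν

/-- A measure on `V` is fully non-degenerate if it is not supported on a proper
affine subspace. -/
def FullyNonDegenerate (ν : Measure (Vd d)) : Prop :=
  ∀ W : AffineSubspace ℝ (Vd d), (W : Set (Vd d)) ≠ Set.univ → ν (W : Set (Vd d)) < 1

/-- Weighted sup-norm `|f|_θ = sup_x |f(x)|/(1+‖x‖)^θ` (with value in `ℝ≥0∞`). -/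
def wnorm (θ : ℝ) (f : Vd d → ℂ) : ℝ≥0∞ :=
  ⨆ x : Vd d, (‖f x‖₊ : ℝ≥0∞) / ENNReal.ofReal ((1 + ‖x‖) ^ θ)

/-- Hölder seminorm `[f]_{ε,λ} = sup_{x ≠ y} |f(x)-f(y)|/(‖x-y‖^ε (1+‖x‖)^λ (1+‖y‖)^λ)`. -/
def hnorm (ε lam : ℝ) (f : Vd d → ℂ) : ℝ≥0∞ :=
  ⨆ (x : Vd d) (y : Vd d) (_ : x ≠ y),
    (‖f x - f y‖₊ : ℝ≥0∞) /
      ENNReal.ofReal (‖x - y‖ ^ ε * (1 + ‖x‖) ^ lam * (1 + ‖y‖) ^ lam)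

/-- `f ∈ 𝔹_{θ,ε,λ}`. -/
def MemB (θ ε lam : ℝ) (f : Vd d → ℂ) : Prop :=
  Continuous f ∧ wnorm θ f < ⊤ ∧ hnorm ε lam f < ⊤

/-- The Fourier operator `P_v f (x) = ∫ e^{i⟨v, hx⟩} f(hx) dμ(h)`, at the level of
functions. -/
def PvF (μ : Measure (Hd d)) (v : Vd d) (f : Vd d → ℂ) (x : Vd d) : ℂ :=
  ∫ h, eI v (aff h x) * f (aff h x) ∂μ

/-- `n`-fold convolution power of a measure on `V`. -/
def convPow (ν : Measure (Vd d)) : ℕ → Measure (Vd d)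
  | 0 => Measure.dirac 0
  | n + 1 => Measure.map (fun p : Vd d × Vd d => p.1 + p.2) ((convPow ν n).prod ν)

end


/-!
Suppose some proper affine subspace has positive `η`-mass and let `k` be the least dimension of
such subspaces. Two distinct `k`-dimensional ones meet in a lower-dimensional subspace, so they
are `η`-almost disjoint; hence only finitely many carry mass above any `ε > 0`, and the maximal
mass `m` is attained on a finite nonempty family `A`. Stationarity writes `η W` as the `μ`-average
of `η (h⁻¹ W) ≤ m`, so for `W ∈ A` almost every `h` sends `h⁻¹ W` back into `A`: almost every `h`
permutes `A`. If `k = 0`, `A` is a finite set of points whose centroid is then fixed by almost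
every `h`, hence by all of `supp μ`, which has no fixed point. If `k ≥ 1`, the union of the
directions of `A` is a finite union of proper nonzero subspaces invariant under `[supp μ̄]`,
against strong irreducibility. Atoms are the case of points, since `V ≠ 0` (no fixed point).
-/

section

open Set Module

namespace AffineSubspace

section Affine

variable {k V₁ P₁ V₂ P₂ : Type*} [DivisionRing k] [AddCommGroup V₁] [Module k V₁]
  [AddTorsor V₁ P₁] [AddCommGroup V₂] [Module k V₂] [AddTorsor V₂ P₂]

theorem finrank_direction_inf_lt [FiniteDimensional k V₁] {W₁ W₂ : AffineSubspace k P₁}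
    (hne : W₁ ≠ W₂) (hrank : finrank k W₁.direction = finrank k W₂.direction)
    (hinter : ((W₁ ⊓ W₂ : AffineSubspace k P₁) : Set P₁).Nonempty) :
    finrank k (W₁ ⊓ W₂).direction < finrank k W₁.direction := by
  have hdir : (W₁ ⊓ W₂).direction ≤ W₁.direction := direction_le inf_le_left
  refine (Submodule.finrank_mono hdir).lt_of_ne fun heq => hne ?_
  have hinf : W₁ ⊓ W₂ = W₁ := eq_of_direction_eq_of_nonempty_of_le
    (Submodule.eq_of_le_of_finrank_eq hdir heq) hinter inf_le_left
  have hle : W₁ ≤ W₂ := inf_eq_left.mp hinf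
  have hdir₂ : W₁.direction = W₂.direction :=
    Submodule.eq_of_le_of_finrank_eq (direction_le hle) hrank
  exact eq_of_direction_eq_of_nonempty_of_le hdir₂ (hinf ▸ hinter) hle

theorem comap_injective {f : P₁ →ᵃ[k] P₂} (hf : Function.Surjective f) :
    Function.Injective (comap f) := fun W₁ W₂ h =>
  SetLike.coe_injective <| (preimage_injective.mpr hf) <| by
    simpa only [coe_comap] using congrArg ((↑) : AffineSubspace k P₁ → Set P₁) h

theorem comap_ne_top {f : P₁ →ᵃ[k] P₂} (hf : Function.Surjective f) {W : AffineSubspace k P₂}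
    (hW : W ≠ ⊤) : W.comap f ≠ ⊤ := by
  rw [Ne, ← comap_top (f := f)]
  exact (comap_injective hf).ne hW

theorem finrank_direction_comap {f : P₁ →ᵃ[k] P₂} (hf : Function.Bijective f)
    (W : AffineSubspace k P₂) : finrank k (W.comap f).direction = finrank k W.direction := by
  let e := AffineEquiv.ofBijective hf
  rw [show W.comap f = W.comap e.toAffineMap from rfl, ← map_symm, map_direction]
  exact e.symm.linear.finrank_map_eq W.direction

theorem linear_mem_direction_of_mem_direction_comap (f : P₁ →ᵃ[k] P₂)
    {W : AffineSubspace k P₂} {v : V₁} (hv : v ∈ (W.comap f).direction) :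
    f.linear v ∈ W.direction :=
  direction_le (map_comap_le f W) <| by
    rw [map_direction]
    exact Submodule.mem_map_of_mem hv

theorem mapsTo_linear_biUnion_direction {f : P₁ →ᵃ[k] P₁} {A : Set (AffineSubspace k P₁)}
    (hA : SurjOn (comap f) A A) :
    MapsTo f.linear (⋃ W ∈ A, (W.direction : Set V₁)) (⋃ W ∈ A, (W.direction : Set V₁)) := by
  intro v hv
  obtain ⟨W, hWA, hvW⟩ := mem_iUnion₂.mp hv
  obtain ⟨W', hW'A, rfl⟩ := hA hWA
  exact mem_biUnion hW'A (linear_mem_direction_of_mem_direction_comap f hvW)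

theorem image_biUnion_eq_of_bijOn_comap {f : P₁ →ᵃ[k] P₁} (hf : Function.Surjective f)
    {A : Set (AffineSubspace k P₁)} (hA : BijOn (comap f) A A) :
    f '' ⋃ W ∈ A, (W : Set P₁) = ⋃ W ∈ A, (W : Set P₁) := by
  conv_lhs => rw [← hA.image_eq]
  simp only [biUnion_image, coe_comap, ← preimage_iUnion₂, image_preimage_eq _ hf]

theorem subsingleton_of_finrank_direction_eq_zero [FiniteDimensional k V₁]
    {W : AffineSubspace k P₁} (hW : finrank k W.direction = 0) : (W : Set P₁).Subsingleton := by
  rw [← vectorSpan_eq_bot_iff_subsingleton (k := k), ← direction_eq_vectorSpan]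
  exact Submodule.finrank_eq_zero.mp hW

end Affine

end AffineSubspace

theorem AffineMap.apply_centroid_eq_of_image_eq {k V P : Type*} [DivisionRing k] [CharZero k]
    [AddCommGroup V] [Module k V] [AddTorsor V P] (f : P →ᵃ[k] P) {s : Finset P}
    (hs : s.Nonempty) (hf : InjOn f s) (himage : f '' s = s) :
    f (s.centroid k _root_.id) = s.centroid k _root_.id := by
  rw [Finset.centroid_def,
    s.map_affineCombination _ _ (s.sum_centroidWeights_eq_one_of_nonempty k hs),
    ← Finset.centroid_def]
  exact s.centroid_eq_of_inj_on_of_image_eq k s (fun i hi j hj => hf hi hj)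
    (fun i _ j _ h => h) (by simpa using himage)

section MinimalDimension

variable {E : Type*} [NormedAddCommGroup E] [NormedSpace ℝ E] [MeasurableSpace E]
  {ν : Measure E}

variable (E) in
def properOfFinrank (k : ℕ) : Set (AffineSubspace ℝ E) :=
  {W | W ≠ ⊤ ∧ finrank ℝ W.direction = k}

theorem AffineSubspace.measurableSet [FiniteDimensional ℝ E] [BorelSpace E]
    (W : AffineSubspace ℝ E) : MeasurableSet (W : Set E) :=
  W.closed_of_finiteDimensional.measurableSet

theorem exists_minimal_finrank_measure_ne_zero {W : AffineSubspace ℝ E} (hW : W ≠ ⊤)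
    (hpos : ν W ≠ 0) :
    ∃ k, ∃ W₀ ∈ properOfFinrank E k, ν W₀ ≠ 0 ∧
      ∀ W' : AffineSubspace ℝ E, W' ≠ ⊤ → finrank ℝ W'.direction < k → ν W' = 0 := by
  classical
  have hex : ∃ k, ∃ W₀ ∈ properOfFinrank E k, ν W₀ ≠ 0 := ⟨_, W, ⟨hW, rfl⟩, hpos⟩
  obtain ⟨W₀, hW₀, hW₀pos⟩ := Nat.find_spec hex
  exact ⟨_, W₀, hW₀, hW₀pos, fun W' hW' hlt =>
    not_not.mp fun h => Nat.find_min hex hlt ⟨W', ⟨hW', rfl⟩, h⟩⟩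

theorem measure_inf_eq_zero_of_ne [FiniteDimensional ℝ E] {k : ℕ}
    (hmin : ∀ W : AffineSubspace ℝ E, W ≠ ⊤ → finrank ℝ W.direction < k → ν W = 0)
    {W₁ W₂ : AffineSubspace ℝ E} (h₁ : W₁ ∈ properOfFinrank E k) (h₂ : W₂ ∈ properOfFinrank E k)
    (hne : W₁ ≠ W₂) : ν ((W₁ ⊓ W₂ : AffineSubspace ℝ E) : Set E) = 0 := by
  rcases ((W₁ ⊓ W₂ : AffineSubspace ℝ E) : Set E).eq_empty_or_nonempty with hempty | hinter
  · rw [hempty, measure_empty]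
  · refine hmin _ (ne_top_of_le_ne_top h₁.1 inf_le_left) ?_
    exact h₁.2 ▸ AffineSubspace.finrank_direction_inf_lt hne (h₁.2.trans h₂.2.symm) hinter

theorem finite_setOf_le_measure [FiniteDimensional ℝ E] [BorelSpace E] [IsFiniteMeasure ν] {k : ℕ}
    (hmin : ∀ W : AffineSubspace ℝ E, W ≠ ⊤ → finrank ℝ W.direction < k → ν W = 0)
    {ε : ℝ≥0∞} (hε : 0 < ε) : {W ∈ properOfFinrank E k | ε ≤ ν W}.Finite := by
  have hfin := Measure.finite_const_le_meas_of_disjoint_iUnion₀ ν hε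
    (As := fun W : properOfFinrank E k => (W : Set E))
    (fun W => (W.1.measurableSet).nullMeasurableSet)
    (fun W₁ W₂ hne => measure_inf_eq_zero_of_ne hmin W₁.2 W₂.2 (Subtype.coe_ne_coe.mpr hne))
    (measure_ne_top _ _)
  exact (hfin.image Subtype.val).subset fun W hW => ⟨⟨W, hW.1⟩, hW.2, rfl⟩

theorem exists_finite_setOf_measure_eq_max [FiniteDimensional ℝ E] [BorelSpace E]
    [IsFiniteMeasure ν] {k : ℕ}
    (hmin : ∀ W : AffineSubspace ℝ E, W ≠ ⊤ → finrank ℝ W.direction < k → ν W = 0)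
    {W₀ : AffineSubspace ℝ E} (hW₀ : W₀ ∈ properOfFinrank E k) (hpos : ν W₀ ≠ 0) :
    ∃ W ∈ properOfFinrank E k, ν W ≠ 0 ∧ (∀ W' ∈ properOfFinrank E k, ν W' ≤ ν W) ∧
      {W' ∈ properOfFinrank E k | ν W' = ν W}.Finite := by
  have hfin := finite_setOf_le_measure hmin (pos_iff_ne_zero.mpr hpos)
  obtain ⟨W, hW, hWmax⟩ :=
    exists_max_image _ (fun W : AffineSubspace ℝ E => ν W) hfin ⟨W₀, hW₀, le_rfl⟩
  have hmax : ∀ W' ∈ properOfFinrank E k, ν W' ≤ ν W := fun W' hW' =>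
    (le_total (ν W₀) (ν W')).elim (fun h => hWmax W' ⟨hW', h⟩)
      fun h => h.trans hW.2
  refine ⟨W, hW.1, (hpos.bot_lt.trans_le hW.2).ne', hmax, hfin.subset ?_⟩
  rintro W' ⟨hW', hW'eq⟩
  exact ⟨hW', hW'eq ▸ hW.2⟩

end MinimalDimension

theorem ae_bijOn_setOf_eq_max {α H : Type*} [MeasurableSpace H] {μ : Measure H}
    [IsProbabilityMeasure μ] {φ : H → α → α} {mass : α → ℝ≥0∞} {𝒮 : Set α} {m : ℝ≥0∞}
    (hm : m ≠ ∞) (hle : ∀ a ∈ 𝒮, mass a ≤ m)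
    (hmass : ∀ a ∈ 𝒮, mass a = ∫⁻ h, mass (φ h a) ∂μ)
    (hφ : ∀ᵐ h ∂μ, MapsTo (φ h) 𝒮 𝒮 ∧ InjOn (φ h) 𝒮) (hA : {a ∈ 𝒮 | mass a = m}.Finite) :
    ∀ᵐ h ∂μ, BijOn (φ h) {a ∈ 𝒮 | mass a = m} {a ∈ 𝒮 | mass a = m} := by
  have hmax : ∀ a ∈ {a ∈ 𝒮 | mass a = m}, ∀ᵐ h ∂μ, mass (φ h a) = m := by
    rintro a ⟨ha, hma⟩
    refine ae_eq_of_ae_le_of_lintegral_le ?_ ?_ aemeasurable_const ?_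
    · filter_upwards [hφ] with h hh using hle _ (hh.1 ha)
    · rwa [← hmass a ha, hma]
    · rw [← hmass a ha, hma, lintegral_const, measure_univ, mul_one]
  filter_upwards [hφ, hA.eventually_all.mpr hmax] with h hh hhA
  have hmaps : MapsTo (φ h) {a ∈ 𝒮 | mass a = m} {a ∈ 𝒮 | mass a = m} :=
    fun a ha => ⟨hh.1 ha.1, hhA a ha⟩
  exact (hA.injOn_iff_bijOn_of_mapsTo hmaps).mp (hh.2.mono fun _ ha => ha.1)

section Support

variable {X : Type*} [TopologicalSpace X] [MeasurableSpace X]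

theorem msupp_subset_of_ae_mem {ρ : Measure X} {C : Set X} (hC : IsClosed C)
    (hae : ∀ᵐ x ∂ρ, x ∈ C) : msupp ρ ⊆ C := fun _ hx =>
  not_not.mp fun hxC => hx Cᶜ hC.isOpen_compl hxC (ae_iff.mp hae)

end Support

variable {d : ℕ}

theorem suppSG_subset_of_ae_mem {ρ : Measure (Ld d)} {C : Set (Ld d)} (hC : IsClosed C)
    (hmul : ∀ a ∈ C, ∀ b ∈ C, a * b ∈ C) (hae : ∀ᵐ g ∂ρ, g ∈ C) : suppSG ρ ⊆ C :=
  closure_minimal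
    (Subsemigroup.closure_le (S := ⟨C, fun ha hb => hmul _ ha _ hb⟩).mpr
      (msupp_subset_of_ae_mem hC hae))
    hC

theorem StronglyIrreducible.exists_not_mapsTo {Γ : Set (Ld d)} (hΓ : StronglyIrreducible Γ)
    {S : Set (Submodule ℝ (Vd d))} (hS : S.Finite) (hne : S.Nonempty)
    (hproper : ∀ D ∈ S, D ≠ ⊥ ∧ D ≠ ⊤) :
    ∃ g ∈ Γ, ¬ MapsTo g (⋃ D ∈ S, (D : Set (Vd d))) (⋃ D ∈ S, (D : Set (Vd d))) := by
  obtain ⟨g, hg, D, hD, x, hx, hgx⟩ := hΓ hS.toFinset (hS.toFinset_nonempty.mpr hne)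
    fun D hD => hproper D (hS.mem_toFinset.mp hD)
  refine ⟨g, hg, fun hmaps => ?_⟩
  obtain ⟨D', hD', hgxD'⟩ := mem_iUnion₂.mp (hmaps (mem_biUnion (hS.mem_toFinset.mp hD) hx))
  exact hgx D' (hS.mem_toFinset.mpr hD') hgxD'

def affMap (h : Hd d) : Vd d →ᵃ[ℝ] Vd d where
  toFun := aff h
  linear := h.2
  map_vadd' p v := by
    simp only [aff, vadd_eq_add, ContinuousLinearMap.coe_coe, map_add]
    abel

theorem bijective_aff {h : Hd d} (hu : IsUnit h.2) : Function.Bijective (aff h) :=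
  (affMap h).linear_bijective_iff.mp (ContinuousLinearMap.isUnit_iff_bijective.mp hu)

theorem continuous_aff_apply (x : Vd d) : Continuous fun h : Hd d => aff h x := by
  unfold aff
  fun_prop

theorem IsAffStationary.measure_eq_lintegral {μ : Measure (Hd d)} [SFinite μ]
    {η : Measure (Vd d)} (hη : IsAffStationary μ η) {s : Set (Vd d)} (hs : MeasurableSet s) :
    η s = ∫⁻ h, η (aff h ⁻¹' s) ∂μ := by
  have := hη.1
  have hmeas : Measurable fun p : Hd d × Vd d => aff p.1 p.2 := by
    unfold aff
    fun_prop
  conv_lhs => rw [← hη.2]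
  rw [Measure.map_apply hmeas hs, Measure.prod_apply (hmeas hs)]
  rfl

theorem IsAffStationary.ae_bijOn_comap {μ : Measure (Hd d)} [IsProbabilityMeasure μ]
    {η : Measure (Vd d)} (hη : IsAffStationary μ η) (hinv : ∀ᵐ h ∂μ, IsUnit h.2) {k : ℕ}
    {W : AffineSubspace ℝ (Vd d)} (hmax : ∀ W' ∈ properOfFinrank (Vd d) k, η W' ≤ η W)
    (hA : {W' ∈ properOfFinrank (Vd d) k | η W' = η W}.Finite) :
    ∀ᵐ h ∂μ, BijOn (AffineSubspace.comap (affMap h)) {W' ∈ properOfFinrank (Vd d) k | η W' = η W}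
      {W' ∈ properOfFinrank (Vd d) k | η W' = η W} := by
  have := hη.1
  refine ae_bijOn_setOf_eq_max (measure_ne_top η W) hmax
    (fun W' _ => hη.measure_eq_lintegral W'.measurableSet) ?_ hA
  filter_upwards [hinv] with h hu
  have hbij : Function.Bijective (affMap h) := bijective_aff hu
  exact ⟨fun W' hW' => ⟨AffineSubspace.comap_ne_top hbij.2 hW'.1,
    (AffineSubspace.finrank_direction_comap hbij W').trans hW'.2⟩,
    (AffineSubspace.comap_injective hbij.2).injOn⟩

theorem exists_eventually_fixed_point_of_bijOn_comap {l : Filter (Hd d)}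
    (hinv : ∀ᶠ h in l, IsUnit h.2) {A : Set (AffineSubspace ℝ (Vd d))} (hA : A.Finite)
    (hpoints : ∀ W ∈ A, (W : Set (Vd d)).Subsingleton) (hne : (⋃ W ∈ A, (W : Set (Vd d))).Nonempty)
    (hperm : ∀ᶠ h in l, BijOn (AffineSubspace.comap (affMap h)) A A) :
    ∃ b, ∀ᶠ h in l, aff h b = b := by
  have hT : (⋃ W ∈ A, (W : Set (Vd d))).Finite := hA.biUnion fun W hW => (hpoints W hW).finite
  refine ⟨hT.toFinset.centroid ℝ _root_.id, ?_⟩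
  filter_upwards [hinv, hperm] with h hu hh
  have hbij : Function.Bijective (affMap h) := bijective_aff hu
  have himage : affMap h '' ↑hT.toFinset = ↑hT.toFinset := by
    rw [hT.coe_toFinset]
    exact AffineSubspace.image_biUnion_eq_of_bijOn_comap hbij.2 hh
  exact (affMap h).apply_centroid_eq_of_image_eq (hT.toFinset_nonempty.mpr hne) hbij.1.injOn himage

theorem not_stronglyIrreducible_of_ae_bijOn_comap {μ : Measure (Hd d)}
    {A : Set (AffineSubspace ℝ (Vd d))} (hA : A.Finite) (hne : A.Nonempty)
    (hproper : ∀ W ∈ A, W.direction ≠ ⊥ ∧ W.direction ≠ ⊤)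
    (hperm : ∀ᵐ h ∂μ, BijOn (AffineSubspace.comap (affMap h)) A A) :
    ¬ StronglyIrreducible (suppSG (μ.map Prod.snd)) := by
  intro hirr
  set U := ⋃ W ∈ A, (W.direction : Set (Vd d))
  have hU : IsClosed U := hA.isClosed_biUnion fun W _ => W.direction.closed_of_finiteDimensional
  have hC : IsClosed {g : Ld d | MapsTo g U U} :=
    hU.setOfPred_mapsTo fun x _ => continuous_eval_const x
  have hsub : suppSG (μ.map Prod.snd) ⊆ {g : Ld d | MapsTo g U U} := by
    refine suppSG_subset_of_ae_mem hC (fun a ha b hb => ha.comp hb) ?_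
    refine (ae_map_iff measurable_snd.aemeasurable hC.measurableSet).mpr ?_
    filter_upwards [hperm] with h hh using
      AffineSubspace.mapsTo_linear_biUnion_direction hh.surjOn
  obtain ⟨g, hg, hgU⟩ := hirr.exists_not_mapsTo (hA.image AffineSubspace.direction)
    (hne.image AffineSubspace.direction)
    (forall_mem_image.mpr hproper)
  rw [biUnion_image] at hgU
  exact hgU (hsub hg)

theorem measure_affineSubspace_eq_zero {μ : Measure (Hd d)} [IsProbabilityMeasure μ]
    (hirr : StronglyIrreducible (suppSG (μ.map Prod.snd))) (hinv : ∀ᵐ h ∂μ, IsUnit h.2)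
    (hnfp : ∀ x : Vd d, ∃ h ∈ msupp μ, aff h x ≠ x) {η : Measure (Vd d)}
    (hη : IsAffStationary μ η) {W : AffineSubspace ℝ (Vd d)} (hW : W ≠ ⊤) : η W = 0 := by
  have := hη.1
  by_contra hpos
  obtain ⟨k, W₀, hW₀, hW₀pos, hmin⟩ := exists_minimal_finrank_measure_ne_zero hW hpos
  obtain ⟨Wm, hWm, hWmpos, hmax, hA⟩ := exists_finite_setOf_measure_eq_max hmin hW₀ hW₀pos
  have hperm := hη.ae_bijOn_comap hinv hmax hA
  have hnonempty : ∀ W' ∈ {W' ∈ properOfFinrank (Vd d) k | η W' = η Wm},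
      (W' : Set (Vd d)).Nonempty := fun W' hW' => nonempty_of_measure_ne_zero (hW'.2 ▸ hWmpos)
  rcases Nat.eq_zero_or_pos k with rfl | hk
  · obtain ⟨x, hx⟩ := hnonempty Wm ⟨hWm, rfl⟩
    obtain ⟨b, hb⟩ := exists_eventually_fixed_point_of_bijOn_comap hinv hA
      (fun W' hW' => AffineSubspace.subsingleton_of_finrank_direction_eq_zero hW'.1.2)
      ⟨x, mem_biUnion ⟨hWm, rfl⟩ hx⟩ hperm
    obtain ⟨h, hh, hhb⟩ := hnfp b
    exact hhb (msupp_subset_of_ae_mem (isClosed_eq (continuous_aff_apply b) continuous_const) hb hh)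
  · refine not_stronglyIrreducible_of_ae_bijOn_comap hA ⟨Wm, hWm, rfl⟩ (fun W' hW' => ⟨?_, ?_⟩)
      hperm hirr
    · exact fun hbot => hk.ne' (hW'.1.2 ▸ hbot ▸ finrank_bot ℝ (Vd d))
    · exact (AffineSubspace.direction_eq_top_iff_of_nonempty (hnonempty W' hW')).not.mpr hW'.1.1

end

noncomputable section

theorem stationary_law_no_atoms_and_null_affine_subspaces_general
    {d : ℕ} (μ : Measure (Hd d)) (α : ℝ) (κ : ℝ → ℝ≥0∞)
    (hC : ConditionC d μ α κ)
    (η : Measure (Vd d)) (hη : IsAffStationary μ η) :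
    (∀ x : Vd d, η {x} = 0) ∧
    (∀ W : AffineSubspace ℝ (Vd d), (W : Set (Vd d)) ≠ Set.univ →
      η (W : Set (Vd d)) = 0) := by
  have := hC.prob
  have hnull : ∀ W : AffineSubspace ℝ (Vd d), (W : Set (Vd d)) ≠ Set.univ → η W = 0 :=
    fun W hW => measure_affineSubspace_eq_zero hC.ip.1 hC.ae_invertible hC.no_fixed_point hη
      ((W.coe_eq_univ_iff).not.mp hW)
  obtain ⟨h, -, hh⟩ := hC.no_fixed_point 0
  have : Nontrivial (Vd d) := nontrivial_of_ne _ _ hh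
  refine ⟨fun x => ?_, hnull⟩
  have hx : (affineSpan ℝ {x} : Set (Vd d)) = {x} := AffineSubspace.coe_affineSpan_singleton ..
  simpa only [hx] using hnull (affineSpan ℝ {x}) (by rw [hx]; exact Set.singleton_ne_univ x)

/-- Under condition `C`, the stationary law `η` has no atoms and gives
measure zero to every proper affine subspace of `V`. -/
theorem stationary_law_no_atoms_and_null_affine_subspaces
    {d : ℕ} (μ : Measure (Hd d)) (α : ℝ) (κ : ℝ → ℝ≥0∞)
    (hC : ConditionC d μ α κ)
    (η : Measure (Vd d)) (hη : IsAffStationary μ η)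
    (huniq : ∀ η' : Measure (Vd d), IsAffStationary μ η' → η' = η) :
    (∀ x : Vd d, η {x} = 0) ∧
    (∀ W : AffineSubspace ℝ (Vd d), (W : Set (Vd d)) ≠ Set.univ →
      η (W : Set (Vd d)) = 0) :=
  stationary_law_no_atoms_and_null_affine_subspaces_general μ α κ hC η hη

end
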